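/- Key decomposition identity for the discrete homotopy operator: for every f ∈ S = MvPolynomial ℤ ℝ with only nonnegative shifts of order at most M, one has X₀ · (L⁰ f) = M f − Δ (I f), where M is the degree operator and I f is the discrete homotopy integrand. -/

import Mathlib

open MvPolynomial

/-- The shift operator on `S = ℝ[…, X₋₁, X₀, X₁, …]` sending `X_k` to `X_{k+m}`;
`shift 1` is the up-shift operator `D`, and `shift (-k)` is `D^{-k}`. -/
noncomputable def shift (m : ℤ) (f : MvPolynomial ℤ ℝ) : MvPolynomial ℤ ℝ :=
  rename (fun k : ℤ => k + m) f

/-- The forward difference operator `Δ = D − id`. -/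
noncomputable def delta (f : MvPolynomial ℤ ℝ) : MvPolynomial ℤ ℝ :=
  shift 1 f - f

/-- The discrete Euler operator `L⁰ f = Σ_{k∈ℤ} D^{−k} (∂f/∂X_k)`. -/
noncomputable def dEuler (f : MvPolynomial ℤ ℝ) : MvPolynomial ℤ ℝ :=
  ∑ k ∈ f.vars, shift (-k) (pderiv k f)

/-- The degree operator `M f = Σ_k X_k · ∂f/∂X_k`. -/
noncomputable def degOp (f : MvPolynomial ℤ ℝ) : MvPolynomial ℤ ℝ :=
  ∑ k ∈ f.vars, X k * pderiv k f

/-- The discrete homotopy integrand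
`I f = Σ_{i=0}^{M−1} Xᵢ · Σ_{k=i+1}^{M} D^{−(k−i)} (∂f/∂X_k)`
for `f` with only nonnegative shifts of order at most `M`. -/
noncomputable def dIntegrand (M : ℕ) (f : MvPolynomial ℤ ℝ) : MvPolynomial ℤ ℝ :=
  ∑ i ∈ Finset.range M,
    X (i : ℤ) * ∑ k ∈ Finset.Icc (i + 1) M,
      shift (-((k : ℤ) - (i : ℤ))) (pderiv (k : ℤ) f)

lemma shift_zero (f : MvPolynomial ℤ ℝ) : shift 0 f = f := by
  have h : (fun k : ℤ => k + 0) = id := by funext k; simp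
  rw [shift, h, rename_id, AlgHom.id_apply]

lemma shift_shift (m n : ℤ) (f : MvPolynomial ℤ ℝ) :
    shift m (shift n f) = shift (n + m) f := by
  have h : ((fun k : ℤ => k + m) ∘ fun k : ℤ => k + n) = fun k : ℤ => k + (n + m) := by
    funext k; simp [Function.comp, add_assoc]
  simp only [shift, rename_rename, h]

lemma shift_mul (m : ℤ) (a b : MvPolynomial ℤ ℝ) :
    shift m (a * b) = shift m a * shift m b := map_mul _ _ _

lemma shift_X (m k : ℤ) : shift m (X k : MvPolynomial ℤ ℝ) = X (k + m) := rename_X _ _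

lemma shift_sum {α : Type*} (m : ℤ) (s : Finset α) (g : α → MvPolynomial ℤ ℝ) :
    shift m (∑ a ∈ s, g a) = ∑ a ∈ s, shift m (g a) := map_sum _ _ _

lemma sum_vars_eq_range (M : ℕ) (f : MvPolynomial ℤ ℝ)
    (hM : ∀ v ∈ f.vars, 0 ≤ v ∧ v ≤ (M : ℤ))
    (G : ℤ → MvPolynomial ℤ ℝ → MvPolynomial ℤ ℝ)
    (hG : ∀ k, G k 0 = 0) :
    ∑ k ∈ f.vars, G k (pderiv k f)
      = ∑ k ∈ Finset.range (M + 1), G (k : ℤ) (pderiv (k : ℤ) f) := by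
  have hsub : f.vars ⊆ (Finset.range (M + 1)).image (Nat.cast : ℕ → ℤ) := by
    intro v hv
    obtain ⟨h0, h1⟩ := hM v hv
    refine Finset.mem_image.2 ⟨v.toNat, Finset.mem_range.2 (by omega), by
      simp [Int.toNat_of_nonneg h0]⟩
  rw [Finset.sum_subset hsub, Finset.sum_image (by intro a _ b _ h; exact_mod_cast h)]
  intro x _ hx
  rw [pderiv_eq_zero_of_notMem_vars hx, hG]

/-- Key decomposition identity for the discrete homotopy operator:
`X₀ · (L⁰ f) = M f − Δ (I f)` for `f` with only nonnegative shifts of order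
at most `M`. -/
theorem discrete_homotopy_decomposition (M : ℕ) (f : MvPolynomial ℤ ℝ)
    (hM : ∀ v ∈ f.vars, 0 ≤ v ∧ v ≤ (M : ℤ)) :
    X (0 : ℤ) * dEuler f = degOp f - delta (dIntegrand M f) := by
  set g : ℕ → MvPolynomial ℤ ℝ := fun k => pderiv (k : ℤ) f with hg
  have hE : dEuler f = ∑ k ∈ Finset.range (M + 1), shift (-(k : ℤ)) (g k) := by
    rw [dEuler, sum_vars_eq_range M f hM (fun k p => shift (-k) p) (fun k => map_zero _)]
  have hD : degOp f = ∑ k ∈ Finset.range (M + 1), X (k : ℤ) * g k := by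
    rw [degOp, sum_vars_eq_range M f hM (fun k p => X k * p) (fun k => mul_zero _)]
  set F : ℕ → MvPolynomial ℤ ℝ := fun j =>
    X (j : ℤ) * ∑ k ∈ Finset.Icc j M, shift (-((k : ℤ) - (j : ℤ))) (g k) with hF
  set G : ℕ → MvPolynomial ℤ ℝ := fun j =>
    X (j : ℤ) * ∑ k ∈ Finset.Icc (j + 1) M, shift (-((k : ℤ) - (j : ℤ))) (g k) with hG
  have hI : dIntegrand M f = ∑ j ∈ Finset.range (M + 1), G j := by
    rw [Finset.sum_range_succ, dIntegrand]
    have hGM : G M = 0 := by simp [hG]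
    rw [hGM, add_zero]
  have hshiftI : shift 1 (dIntegrand M f) = ∑ j ∈ Finset.range (M + 1), F j - F 0 := by
    rw [dIntegrand, shift_sum]
    have hterm : ∀ i ∈ Finset.range M,
        shift 1 (X (i : ℤ) * ∑ k ∈ Finset.Icc (i + 1) M,
          shift (-((k : ℤ) - (i : ℤ))) (g k)) = F (i + 1) := by
      intro i _
      rw [shift_mul, shift_X, shift_sum]
      simp only [hF]
      have hx : ((i : ℤ) + 1) = (((i + 1 : ℕ)) : ℤ) := by push_cast; ring
      rw [hx]
      refine congrArg₂ (· * ·) rfl (Finset.sum_congr rfl fun k _ => ?_)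
      rw [shift_shift]
      congr 1
      push_cast
      ring
    rw [Finset.sum_congr rfl hterm, Finset.sum_range_succ' F]
    ring
  have hFG : ∀ j ∈ Finset.range (M + 1), F j = X (j : ℤ) * g j + G j := by
    intro j hj
    have hjM : j ≤ M := by simpa [Nat.lt_succ_iff] using hj
    have hins : Finset.Icc j M = insert j (Finset.Icc (j + 1) M) := by
      ext x; simp; omega
    simp only [hF, hG, hins]
    rw [Finset.sum_insert (by simp)]
    have hz : shift (-((j : ℤ) - (j : ℤ))) (g j) = g j := by
      simp [shift_zero]
    rw [hz, mul_add]
  rw [hD, hE, delta, hshiftI, hI]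
  rw [Finset.sum_congr rfl hFG, Finset.sum_add_distrib]
  have h0 : F 0 = X (0 : ℤ) * ∑ k ∈ Finset.range (M + 1), shift (-(k : ℤ)) (g k) := by
    simp only [hF]
    have hset : Finset.Icc 0 M = Finset.range (M + 1) := by
      ext x; simp [Nat.lt_succ_iff]
    rw [Nat.cast_zero, hset]
    refine congrArg₂ (· * ·) rfl (Finset.sum_congr rfl fun k _ => ?_)
    norm_num
  rw [h0]
  ring
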